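/- arXiv:1003.0355 — 6 statements merged into one kernel-verified Lean document; each statement's English description precedes it below -/
import Mathlib

section
/- For every Q ∈ Sp(2) with a = Q₀₀, b = Q₀₁, and every skew-adjoint quaternionic matrix η ∈ sp(2) (i.e. ηᴴ = −η), the directional derivative of F at Q along the left-invariant direction Qη satisfies Re((Q·η)₀₀) = −( Re( conj(Im(a)) · η₀₀ ) + Re( conj(b) · η₀₁ ) ). In other words, dF(Qη) equals the left-invariant inner product of Qη with the vector −Q·[[Im(a), b], [−b̄, 0]], verifying that ∇F|_Q = −Q·[[Im(a), b], [−b̄, 0]]. -/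
noncomputable section
open Matrix

/-- The real quaternions. -/
abbrev H : Type := Quaternion ℝ

/-- `Sp(2)`, the quaternionic unitary group `{Q | Q Qᴴ = 1}`. -/
def Sp2 : Set (Matrix (Fin 2) (Fin 2) H) := {Q | Q * Qᴴ = 1}

/-- For every `Q ∈ Sp(2)` with `a = Q₀₀`, `b = Q₀₁`, and every
skew-adjoint quaternionic matrix `η` (i.e. `ηᴴ = −η`), the directional derivative
of `F(Q) = Re Q₀₀` along the left-invariant direction `Qη`, namely
`Re ((Q·η)₀₀)`, equals `−(Re(conj(Im a)·η₀₀) + Re(conj b·η₀₁))`, i.e. the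
left-invariant inner product of `Qη` with `−Q·[[Im a, b], [−b̄, 0]]`; this
verifies `∇F|_Q = −Q·[[Im a, b], [−b̄, 0]]`. -/
theorem gradient_of_F (Q η : Matrix (Fin 2) (Fin 2) H) (hQ : Q ∈ Sp2)
    (hη : ηᴴ = -η) :
    ((Q * η) 0 0).re =
      -((star (Q 0 0).im * η 0 0).re + (star (Q 0 1) * η 0 1).re) := by
  have h1 : star (η 0 0) = -(η 0 0) := by
    have := congrFun (congrFun hη 0) 0
    simpa [Matrix.conjTranspose_apply] using this
  have h2 : star (η 0 1) = -(η 1 0) := by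
    have := congrFun (congrFun hη 1) 0
    simpa [Matrix.conjTranspose_apply] using this
  have e1 : (η 0 0).re = 0 := by
    have := congrArg QuaternionAlgebra.re h1
    simp at this; linarith
  have e2I : (η 0 1).imI = (η 1 0).imI := by
    have := congrArg QuaternionAlgebra.imI h2; simp at this; linarith
  have e2J : (η 0 1).imJ = (η 1 0).imJ := by
    have := congrArg QuaternionAlgebra.imJ h2; simp at this; linarith
  have e2K : (η 0 1).imK = (η 1 0).imK := by
    have := congrArg QuaternionAlgebra.imK h2; simp at this; linarith
  have e2R : (η 0 1).re = -(η 1 0).re := by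
    have := congrArg QuaternionAlgebra.re h2; simp at this; linarith
  simp only [Matrix.mul_apply, Fin.sum_univ_two]
  simp [Quaternion.re_mul, Quaternion.re_add, Quaternion.im, Quaternion.imI_star, Quaternion.imJ_star, Quaternion.imK_star, Quaternion.imI_im, Quaternion.imJ_im, Quaternion.imK_im, QuaternionAlgebra.imI_star, QuaternionAlgebra.imJ_star, QuaternionAlgebra.imK_star, QuaternionAlgebra.imI_im, QuaternionAlgebra.imJ_im, QuaternionAlgebra.imK_im, e1, e2I, e2J, e2K, e2R]
  erw [QuaternionAlgebra.imI_star, QuaternionAlgebra.imJ_star, QuaternionAlgebra.imK_star]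
  erw [QuaternionAlgebra.imI_im, QuaternionAlgebra.imJ_im, QuaternionAlgebra.imK_im]
  ring
end
end

section
/- For all ξ₁, ξ₂, ξ₃ ∈ sp(2), writing ξᵢ = [[xᵢ, yᵢ], [−ȳᵢ, zᵢ]] and D(ξ₁, ξ₂) := ½·[[0, y₁z₂ + y₂z₁ − x₁y₂ − x₂y₁], [−conj(y₁z₂ + y₂z₁ − x₁y₂ − x₂y₁), 0]], the Koszul identity for the left-invariant metric holds: 2·⟨ ½[ξ₁, ξ₂] + D(ξ₁, ξ₂), ξ₃ ⟩ = −⟨ξ₁, [ξ₂, ξ₃]⟩ + ⟨ξ₂, [ξ₃, ξ₁]⟩ + ⟨ξ₃, [ξ₁, ξ₂]⟩, where [·, ·] is the matrix commutator. Consequently the Levi-Civita connection of the left-invariant metric on Sp(2) satisfies ∇_{ξ₁} ξ₂ = ½[ξ₁, ξ₂] + D(ξ₁, ξ₂) on left-invariant vector fields. -/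
noncomputable section
open Matrix

/-- The inner product on `sp(2)` (skew-adjoint matrices `[[x,y],[−ȳ,z]]`)
given by `⟨ξ, η⟩ = Re(x̄_ξ x_η) + Re(ȳ_ξ y_η) + Re(z̄_ξ z_η)`, corresponding to
the left-invariant metric `|[[x,y],[−ȳ,z]]|² = |x|² + |y|² + |z|²` on `Sp(2)`. -/
def sp2Inner (ξ η : Matrix (Fin 2) (Fin 2) H) : ℝ :=
  (star (ξ 0 0) * η 0 0).re + (star (ξ 0 1) * η 0 1).re + (star (ξ 1 1) * η 1 1).re

/-- `D(ξ₁, ξ₂) = ½·[[0, w], [−w̄, 0]]` with `w = y₁z₂ + y₂z₁ − x₁y₂ − x₂y₁`,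
where `ξᵢ = [[xᵢ, yᵢ], [−ȳᵢ, zᵢ]]`. -/
def Dop (ξ₁ ξ₂ : Matrix (Fin 2) (Fin 2) H) : Matrix (Fin 2) (Fin 2) H :=
  (2⁻¹ : ℝ) • !![0, ξ₁ 0 1 * ξ₂ 1 1 + ξ₂ 0 1 * ξ₁ 1 1 - ξ₁ 0 0 * ξ₂ 0 1 - ξ₂ 0 0 * ξ₁ 0 1;
                 -star (ξ₁ 0 1 * ξ₂ 1 1 + ξ₂ 0 1 * ξ₁ 1 1 - ξ₁ 0 0 * ξ₂ 0 1 - ξ₂ 0 0 * ξ₁ 0 1), 0]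

set_option maxHeartbeats 4000000 in
/-- The Koszul identity for the left-invariant metric on `Sp(2)`:
for all `ξ₁, ξ₂, ξ₃ ∈ sp(2)`,
`2⟨½[ξ₁,ξ₂] + D(ξ₁,ξ₂), ξ₃⟩ = −⟨ξ₁,[ξ₂,ξ₃]⟩ + ⟨ξ₂,[ξ₃,ξ₁]⟩ + ⟨ξ₃,[ξ₁,ξ₂]⟩`,
so the Levi-Civita connection satisfies `∇_{ξ₁} ξ₂ = ½[ξ₁,ξ₂] + D(ξ₁,ξ₂)` on
left-invariant vector fields. -/
theorem koszul_identity_sp2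
    (x₁ y₁ z₁ x₂ y₂ z₂ x₃ y₃ z₃ : H)
    (hx₁ : x₁.re = 0) (hz₁ : z₁.re = 0)
    (hx₂ : x₂.re = 0) (hz₂ : z₂.re = 0)
    (hx₃ : x₃.re = 0) (hz₃ : z₃.re = 0) :
    let ξ₁ : Matrix (Fin 2) (Fin 2) H := !![x₁, y₁; -star y₁, z₁]
    let ξ₂ : Matrix (Fin 2) (Fin 2) H := !![x₂, y₂; -star y₂, z₂]
    let ξ₃ : Matrix (Fin 2) (Fin 2) H := !![x₃, y₃; -star y₃, z₃]
    2 * sp2Inner ((2⁻¹ : ℝ) • (ξ₁ * ξ₂ - ξ₂ * ξ₁) + Dop ξ₁ ξ₂) ξ₃ =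
      -sp2Inner ξ₁ (ξ₂ * ξ₃ - ξ₃ * ξ₂) + sp2Inner ξ₂ (ξ₃ * ξ₁ - ξ₁ * ξ₃)
        + sp2Inner ξ₃ (ξ₁ * ξ₂ - ξ₂ * ξ₁) := by
  simp only [sp2Inner, Dop, Matrix.mul_apply, Fin.sum_univ_two, Matrix.add_apply,
    Matrix.sub_apply, Matrix.smul_apply, Matrix.cons_val', Matrix.cons_val_zero,
    Matrix.cons_val_one, Matrix.head_cons, Matrix.head_fin_const, Matrix.empty_val',
    Matrix.cons_val_fin_one, Matrix.of_apply]
  simp [Quaternion.re_mul, Quaternion.imI_mul, Quaternion.imJ_mul, Quaternion.imK_mul]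
  obtain ⟨x₁, a₁, b₁, c₁⟩ := x₁
  obtain ⟨y₁r, y₁i, y₁j, y₁k⟩ := y₁
  obtain ⟨z₁, d₁, e₁, f₁⟩ := z₁
  obtain ⟨x₂, a₂, b₂, c₂⟩ := x₂
  obtain ⟨y₂r, y₂i, y₂j, y₂k⟩ := y₂
  obtain ⟨z₂, d₂, e₂, f₂⟩ := z₂
  obtain ⟨x₃, a₃, b₃, c₃⟩ := x₃
  obtain ⟨y₃r, y₃i, y₃j, y₃k⟩ := y₃
  obtain ⟨z₃, d₃, e₃, f₃⟩ := z₃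
  simp only [QuaternionAlgebra.re] at hx₁ hz₁ hx₂ hz₂ hx₃ hz₃
  subst hx₁ hz₁ hx₂ hz₂ hx₃ hz₃
  simp [sp2Inner, Dop, Matrix.mul_apply, Fin.sum_univ_two, Quaternion.ext_iff,
    Quaternion.re_mul, Quaternion.re_add, Quaternion.re_sub, Quaternion.re_neg,
    Quaternion.re_smul, Quaternion.re_star, Quaternion.imI_mul, Quaternion.imJ_mul,
    Quaternion.imK_mul]
  ring
end
end

section
/- Let Q ∈ Sp(2) with a = Q₀₀ = a₁·i + a₂·j and b = Q₀₁ = b₀ + b₁·i for real numbers a₁, a₂, b₀, b₁ (so Re(a) = 0 and, by unitarity, ‖a‖² + ‖b‖² = 1). For a purely imaginary quaternion x define ξ(x) := [[ā·x·a − x, ā·x·b], [b̄·x·a, b̄·x·b − x]] ∈ sp(2), and set g_{αβ} := ⟨ξ(x_α), ξ(x_β)⟩ for (x₁, x₂, x₃) = (i, j, k). Then, with ‖a‖² = a₁² + a₂² and ‖b‖² = b₀² + b₁²: g₁₁ = 1 − ‖a‖²‖b‖² + 4a₂², g₂₂ = 1 − ‖a‖²‖b‖² + 4(a₁² + b₁²),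 g₃₃ = 1 − ‖a‖²‖b‖² + 4(a₁² + a₂² + b₁²), g₁₂ = g₂₁ = −4a₁a₂, and g₁₃ = g₃₁ = g₂₃ = g₃₂ = 0. -/
noncomputable section
open Matrix

/-- The quaternion unit `i`. -/
def qi : H := ⟨0, 1, 0, 0⟩
/-- The quaternion unit `j`. -/
def qj : H := ⟨0, 0, 1, 0⟩
/-- The quaternion unit `k`. -/
def qk : H := ⟨0, 0, 0, 1⟩

/-- For a purely imaginary quaternion `x`,
`ξ(x) = [[ā·x·a − x, ā·x·b], [b̄·x·a, b̄·x·b − x]]`; the vectors `Q·ξ(x)` span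
the tangent space of the Gromoll–Meyer `S³`-orbit through `Q` (`a = Q₀₀`,
`b = Q₀₁`). -/
def xiM (a b x : H) : Matrix (Fin 2) (Fin 2) H :=
  !![star a * x * a - x, star a * x * b;
     star b * x * a, star b * x * b - x]

def mkH (r x y z : ℝ) : H := ⟨r, x, y, z⟩

@[simp] theorem mkH_re (r x y z : ℝ) : (mkH r x y z).re = r := rfl
@[simp] theorem mkH_imI (r x y z : ℝ) : (mkH r x y z).imI = x := rfl
@[simp] theorem mkH_imJ (r x y z : ℝ) : (mkH r x y z).imJ = y := rfl
@[simp] theorem mkH_imK (r x y z : ℝ) : (mkH r x y z).imK = z := rfl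
theorem qi_eq : qi = mkH 0 1 0 0 := rfl
theorem qj_eq : qj = mkH 0 0 1 0 := rfl
theorem qk_eq : qk = mkH 0 0 0 1 := rfl

/-- The Gram matrix `g_{αβ} = ⟨ξ(x_α), ξ(x_β)⟩`,
`(x₁,x₂,x₃) = (i,j,k)`, of the Gromoll–Meyer orbit frame at a point of `Sp(2)`
in the normal form `a = a₁ i + a₂ j`, `b = b₀ + b₁ i`:
`g₁₁ = 1 − ‖a‖²‖b‖² + 4a₂²`, `g₂₂ = 1 − ‖a‖²‖b‖² + 4(a₁² + b₁²)`,
`g₃₃ = 1 − ‖a‖²‖b‖² + 4(a₁² + a₂² + b₁²)`, `g₁₂ = g₂₁ = −4a₁a₂`,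
`g₁₃ = g₃₁ = g₂₃ = g₃₂ = 0`. -/
theorem gram_matrix_of_GM_orbit (Q : Matrix (Fin 2) (Fin 2) H) (hQ : Q ∈ Sp2)
    (a₁ a₂ b₀ b₁ : ℝ)
    (ha : Q 0 0 = ⟨0, a₁, a₂, 0⟩) (hb : Q 0 1 = ⟨b₀, b₁, 0, 0⟩) :
    let a : H := Q 0 0
    let b : H := Q 0 1
    let na : ℝ := a₁ ^ 2 + a₂ ^ 2
    let nb : ℝ := b₀ ^ 2 + b₁ ^ 2
    sp2Inner (xiM a b qi) (xiM a b qi) = 1 - na * nb + 4 * a₂ ^ 2 ∧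
    sp2Inner (xiM a b qj) (xiM a b qj) = 1 - na * nb + 4 * (a₁ ^ 2 + b₁ ^ 2) ∧
    sp2Inner (xiM a b qk) (xiM a b qk)
      = 1 - na * nb + 4 * (a₁ ^ 2 + a₂ ^ 2 + b₁ ^ 2) ∧
    sp2Inner (xiM a b qi) (xiM a b qj) = -4 * a₁ * a₂ ∧
    sp2Inner (xiM a b qj) (xiM a b qi) = -4 * a₁ * a₂ ∧
    sp2Inner (xiM a b qi) (xiM a b qk) = 0 ∧
    sp2Inner (xiM a b qk) (xiM a b qi) = 0 ∧
    sp2Inner (xiM a b qj) (xiM a b qk) = 0 ∧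
    sp2Inner (xiM a b qk) (xiM a b qj) = 0 := by
  intro a b na nb
  have key := congrFun (congrFun hQ 0) 0
  simp only [Matrix.mul_apply, Fin.sum_univ_two, Matrix.conjTranspose_apply,
    Matrix.one_apply_eq] at key
  rw [ha, hb] at key
  have h : a₁ ^ 2 + a₂ ^ 2 + b₀ ^ 2 + b₁ ^ 2 = 1 := by
    change mkH 0 a₁ a₂ 0 * star (mkH 0 a₁ a₂ 0) + mkH b₀ b₁ 0 0 * star (mkH b₀ b₁ 0 0) = 1 at key
    have h2 := congrArg QuaternionAlgebra.re key
    simp [Quaternion.re_mul, Quaternion.re_one] at h2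
    nlinarith [h2]
  have ha' : a = mkH 0 a₁ a₂ 0 := ha
  have hb' : b = mkH b₀ b₁ 0 0 := hb
  have hna : na = a₁ ^ 2 + a₂ ^ 2 := rfl
  have hnb : nb = b₀ ^ 2 + b₁ ^ 2 := rfl
  rw [ha', hb', hna, hnb]
  refine ⟨?_, ?_, ?_, ?_, ?_, ?_, ?_, ?_, ?_⟩ <;>
  · simp only [sp2Inner, xiM, qi_eq, qj_eq, qk_eq, Matrix.cons_val', Matrix.cons_val_zero,
      Matrix.cons_val_one, Matrix.head_cons, Matrix.empty_val', Matrix.cons_val_fin_one,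
      Matrix.head_fin_const, Matrix.of_apply]
    simp only [Quaternion.re_mul, Quaternion.imI_mul, Quaternion.imJ_mul, Quaternion.imK_mul,
      Quaternion.re_sub, Quaternion.imI_sub, Quaternion.imJ_sub, Quaternion.imK_sub,
      Quaternion.re_star, Quaternion.imI_star, Quaternion.imJ_star, Quaternion.imK_star,
      mkH_re, mkH_imI, mkH_imJ, mkH_imK]
    first
    | ring1
    | linear_combination (a₁ ^ 2 + a₂ ^ 2 + b₀ ^ 2 + b₁ ^ 2 - 1) * h
end
end

section
/- For every unit quaternion q (‖q‖ = 1) and every Q ∈ Sp(2), the matrix Q' := [[q, 0], [0, 1]] · Q · [[q̄, 0], [0, q̄]] again lies in Sp(2), and Re(Q'₀₀) = Re(Q₀₀). Hence the function F(Q) = Re(Q₀₀) is invariant under the Gromoll–Meyer S³-action on Sp(2) and descends to a well-defined function on the Gromoll–Meyer sphere Σ⁷ = Sp(2)/S³. -/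
noncomputable section
open Matrix

/-- For every unit quaternion `q` and every `Q ∈ Sp(2)`, the
matrix `Q' = diag(q,1)·Q·diag(q̄,q̄)` of the Gromoll–Meyer `S³`-action again
lies in `Sp(2)` and satisfies `Re Q'₀₀ = Re Q₀₀`.  Hence `F(Q) = Re Q₀₀` is
invariant under the Gromoll–Meyer action and descends to the Gromoll–Meyer
sphere `Σ⁷ = Sp(2)/S³`. -/
theorem F_is_GM_invariant (q : H) (hq : ‖q‖ = 1)
    (Q : Matrix (Fin 2) (Fin 2) H) (hQ : Q ∈ Sp2) :
    !![q, 0; 0, 1] * Q * !![star q, 0; 0, star q] ∈ Sp2 ∧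
    (((!![q, 0; 0, 1] * Q * !![star q, 0; 0, star q]) 0 0).re = (Q 0 0).re) := by
  have hns : Quaternion.normSq q = 1 := by
    have := Quaternion.normSq_eq_norm_mul_self (a := q)
    rw [hq] at this; simpa using this
  have h1 : q * star q = 1 := by rw [Quaternion.self_mul_star, hns]; norm_num
  have h2 : star q * q = 1 := by rw [Quaternion.star_mul_self, hns]; norm_num
  have hB : (!![star q, 0; 0, star q] : Matrix (Fin 2) (Fin 2) H) *
      (!![star q, 0; 0, star q])ᴴ = 1 := by
    refine Matrix.ext fun i j => ?_
    fin_cases i <;> fin_cases j <;>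
      simp [Matrix.mul_apply, Fin.sum_univ_two, conjTranspose_apply, h2]
  have hA : (!![q, 0; 0, 1] : Matrix (Fin 2) (Fin 2) H) *
      (!![q, 0; 0, 1])ᴴ = 1 := by
    refine Matrix.ext fun i j => ?_
    fin_cases i <;> fin_cases j <;>
      simp [Matrix.mul_apply, Fin.sum_univ_two, conjTranspose_apply, h1]
  constructor
  · show _ * _ = 1
    rw [conjTranspose_mul, conjTranspose_mul]
    calc !![q, 0; 0, 1] * Q * !![star q, 0; 0, star q] *
          ((!![star q, 0; 0, star q])ᴴ * (Qᴴ * (!![q, 0; 0, 1])ᴴ))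
        = !![q, 0; 0, 1] * Q * (!![star q, 0; 0, star q] *
          (!![star q, 0; 0, star q])ᴴ) * (Qᴴ * (!![q, 0; 0, 1])ᴴ) := by
          noncomm_ring
      _ = 1 := by rw [hB, Matrix.mul_one, Matrix.mul_assoc, ← Matrix.mul_assoc Q, hQ,
            Matrix.one_mul, hA]
  · have e : (!![q, 0; 0, 1] * Q * !![star q, 0; 0, star q]) 0 0
        = q * Q 0 0 * star q := by
      simp [Matrix.mul_apply, Fin.sum_univ_two, Matrix.vecMul, dotProduct]
    rw [e]
    have hre : (q.re)^2 + (q.imI)^2 + (q.imJ)^2 + (q.imK)^2 = 1 := by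
      have := hns; rw [Quaternion.normSq_def'] at this; linarith [this]
    simp only [Quaternion.re_mul, Quaternion.re_star, Quaternion.imI_star,
      Quaternion.imJ_star, Quaternion.imK_star, Quaternion.imI_mul,
      Quaternion.imJ_mul, Quaternion.imK_mul]
    linear_combination (Q 0 0).re * hre
end
end

section
/- Let Q ∈ Sp(2) with entries a = Q₀₀, b = Q₀₁, c = Q₁₀, d = Q₁₁, and let x ∈ ℍ be purely imaginary (Re(x) = 0). Then the curve γ(t) := [[exp(t·x), 0], [0, 1]] · Q · [[exp(−t·x), 0], [0, exp(−t·x)]] satisfies γ(0) = Q, γ(t) ∈ Sp(2) for all t ∈ ℝ, and its derivative at t = 0 equals Q · [[ā·x·a − x, ā·x·b], [b̄·x·a, b̄·x·b − x]]. Hence the tangent space at Q of the Gromoll–Meyer S³-orbit through Q is spanned by the vectors Q·ξ(x), x ∈ {i, j, k}, where ξ(x) = [[ā·x·a − x, ā·x·b], [b̄·x·a, b̄·x·b − x]]. -/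
noncomputable section
open Matrix

/-- The curve `t ↦ diag(exp(tx),1)·Q·diag(exp(−tx),exp(−tx))` through `Q`
inside the Gromoll–Meyer `S³`-orbit. -/
def GMcurve (Q : Matrix (Fin 2) (Fin 2) H) (x : H) (t : ℝ) :
    Matrix (Fin 2) (Fin 2) H :=
  !![NormedSpace.exp (t • x), 0; 0, 1] * Q *
    !![NormedSpace.exp (-(t • x)), 0; 0, NormedSpace.exp (-(t • x))]

/-- For `Q ∈ Sp(2)` with `a = Q₀₀`, `b = Q₀₁` and a purely
imaginary quaternion `x`, the curve
`γ(t) = diag(exp(tx),1)·Q·diag(exp(−tx),exp(−tx))` satisfies `γ(0) = Q`,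
`γ(t) ∈ Sp(2)` for all `t`, and its derivative at `t = 0` is
`Q·ξ(x)` where `ξ(x) = [[ā·x·a − x, ā·x·b], [b̄·x·a, b̄·x·b − x]]`.
Hence the tangent space at `Q` of the Gromoll–Meyer orbit is spanned by
`Q·ξ(i)`, `Q·ξ(j)`, `Q·ξ(k)`. -/
theorem GM_orbit_tangent_vectors (Q : Matrix (Fin 2) (Fin 2) H) (hQ : Q ∈ Sp2)
    (x : H) (hx : x.re = 0) :
    GMcurve Q x 0 = Q ∧
    (∀ t : ℝ, GMcurve Q x t ∈ Sp2) ∧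
    (∀ i j : Fin 2, HasDerivAt (fun t : ℝ => GMcurve Q x t i j)
      ((Q * xiM (Q 0 0) (Q 0 1) x) i j) 0) := by
  have hxs : star x = -x := Quaternion.star_eq_neg.mpr hx
  have hstx : ∀ t : ℝ, star (t • x) = -(t • x) := by
    intro t
    rw [Quaternion.star_eq_neg]
    simp [hx]
  have hsu : ∀ t : ℝ, star (NormedSpace.exp (t • x)) = NormedSpace.exp (-(t • x)) := by
    intro t
    rw [NormedSpace.star_exp, hstx]
  have hsv : ∀ t : ℝ, star (NormedSpace.exp (-(t • x))) = NormedSpace.exp (t • x) := by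
    intro t
    rw [NormedSpace.star_exp, star_neg, hstx, neg_neg]
  have huv : ∀ t : ℝ, NormedSpace.exp (t • x) * NormedSpace.exp (-(t • x)) = 1 := by
    intro t
    letI : NormedAlgebra ℚ H := NormedAlgebra.restrictScalars ℚ ℝ H
    rw [← NormedSpace.exp_add_of_commute (Commute.neg_right (Commute.refl (t • x))),
      add_neg_cancel, NormedSpace.exp_zero]
  have hvu : ∀ t : ℝ, NormedSpace.exp (-(t • x)) * NormedSpace.exp (t • x) = 1 := by
    intro t
    letI : NormedAlgebra ℚ H := NormedAlgebra.restrictScalars ℚ ℝ H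
    rw [← NormedSpace.exp_add_of_commute (Commute.neg_left (Commute.refl (t • x))),
      neg_add_cancel, NormedSpace.exp_zero]
  have hQ' : Q * Qᴴ = 1 := hQ
  have h1 : Q 0 0 * star (Q 0 0) + Q 0 1 * star (Q 0 1) = 1 := by
    have := congrFun (congrFun hQ' 0) 0
    simpa [Matrix.mul_apply, Fin.sum_univ_two, Matrix.conjTranspose_apply,
      Matrix.one_apply] using this
  have h2 : Q 1 0 * star (Q 0 0) + Q 1 1 * star (Q 0 1) = 0 := by
    have := congrFun (congrFun hQ' 1) 0
    simpa [Matrix.mul_apply, Fin.sum_univ_two, Matrix.conjTranspose_apply,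
      Matrix.one_apply] using this
  -- entrywise description of the curve
  have hcurve : ∀ t : ℝ, GMcurve Q x t =
      !![NormedSpace.exp (t • x) * Q 0 0 * NormedSpace.exp (-(t • x)),
         NormedSpace.exp (t • x) * Q 0 1 * NormedSpace.exp (-(t • x));
         Q 1 0 * NormedSpace.exp (-(t • x)),
         Q 1 1 * NormedSpace.exp (-(t • x))] := by
    intro t
    rw [GMcurve]
    conv_lhs => rw [Matrix.eta_fin_two Q]
    rw [Matrix.mul_fin_two, Matrix.mul_fin_two]
    simp only [zero_mul, mul_zero, add_zero, zero_add, one_mul, mul_one]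
  -- the product `Q ξ(x)`
  have e00 : Q 0 0 * (star (Q 0 0) * x * Q 0 0 - x) + Q 0 1 * (star (Q 0 1) * x * Q 0 0)
      = x * Q 0 0 - Q 0 0 * x := by
    have h : Q 0 0 * (star (Q 0 0) * x * Q 0 0 - x) + Q 0 1 * (star (Q 0 1) * x * Q 0 0)
        = (Q 0 0 * star (Q 0 0) + Q 0 1 * star (Q 0 1)) * (x * Q 0 0) - Q 0 0 * x := by
      noncomm_ring
    rw [h, h1, one_mul]
  have e01 : Q 0 0 * (star (Q 0 0) * x * Q 0 1) + Q 0 1 * (star (Q 0 1) * x * Q 0 1 - x)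
      = x * Q 0 1 - Q 0 1 * x := by
    have h : Q 0 0 * (star (Q 0 0) * x * Q 0 1) + Q 0 1 * (star (Q 0 1) * x * Q 0 1 - x)
        = (Q 0 0 * star (Q 0 0) + Q 0 1 * star (Q 0 1)) * (x * Q 0 1) - Q 0 1 * x := by
      noncomm_ring
    rw [h, h1, one_mul]
  have e10 : Q 1 0 * (star (Q 0 0) * x * Q 0 0 - x) + Q 1 1 * (star (Q 0 1) * x * Q 0 0)
      = -(Q 1 0 * x) := by
    have h : Q 1 0 * (star (Q 0 0) * x * Q 0 0 - x) + Q 1 1 * (star (Q 0 1) * x * Q 0 0)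
        = (Q 1 0 * star (Q 0 0) + Q 1 1 * star (Q 0 1)) * (x * Q 0 0) - Q 1 0 * x := by
      noncomm_ring
    rw [h, h2, zero_mul, zero_sub]
  have e11 : Q 1 0 * (star (Q 0 0) * x * Q 0 1) + Q 1 1 * (star (Q 0 1) * x * Q 0 1 - x)
      = -(Q 1 1 * x) := by
    have h : Q 1 0 * (star (Q 0 0) * x * Q 0 1) + Q 1 1 * (star (Q 0 1) * x * Q 0 1 - x)
        = (Q 1 0 * star (Q 0 0) + Q 1 1 * star (Q 0 1)) * (x * Q 0 1) - Q 1 1 * x := by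
      noncomm_ring
    rw [h, h2, zero_mul, zero_sub]
  have hQxi : Q * xiM (Q 0 0) (Q 0 1) x =
      !![x * Q 0 0 - Q 0 0 * x, x * Q 0 1 - Q 0 1 * x;
         -(Q 1 0 * x), -(Q 1 1 * x)] := by
    conv_lhs => rw [Matrix.eta_fin_two Q]
    rw [xiM, Matrix.mul_fin_two]
    simp only [Matrix.cons_val', Matrix.cons_val_zero, Matrix.cons_val_one,
      Matrix.head_cons, Matrix.head_fin_const, Matrix.empty_val',
      Matrix.cons_val_fin_one, Matrix.of_apply]
    rw [e00, e01, e10, e11]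
  refine ⟨?_, ?_, ?_⟩
  · rw [hcurve 0]
    conv_rhs => rw [Matrix.eta_fin_two Q]
    simp [NormedSpace.exp_zero]
  · intro t
    show GMcurve Q x t * (GMcurve Q x t)ᴴ = 1
    set u := NormedSpace.exp (t • x) with hu
    set v := NormedSpace.exp (-(t • x)) with hv
    have hA : (!![u, 0; 0, 1] : Matrix (Fin 2) (Fin 2) H) *
        (!![u, 0; 0, 1] : Matrix (Fin 2) (Fin 2) H)ᴴ = 1 := by
      have hct : (!![u, 0; 0, (1:H)])ᴴ = !![star u, 0; 0, 1] := by
        rw [Matrix.eta_fin_two (!![u, 0; 0, (1:H)])ᴴ]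
        simp [Matrix.conjTranspose_apply]
      rw [hct, Matrix.mul_fin_two, Matrix.one_fin_two]
      simp only [zero_mul, mul_zero, add_zero, zero_add, one_mul, mul_one, hu, hsu t, huv t]
    have hB : (!![v, 0; 0, v] : Matrix (Fin 2) (Fin 2) H) *
        (!![v, 0; 0, v] : Matrix (Fin 2) (Fin 2) H)ᴴ = 1 := by
      have hct : (!![v, 0; 0, v])ᴴ = !![star v, 0; 0, star v] := by
        rw [Matrix.eta_fin_two (!![v, 0; 0, v])ᴴ]
        simp [Matrix.conjTranspose_apply]
      rw [hct, Matrix.mul_fin_two, Matrix.one_fin_two]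
      simp only [zero_mul, mul_zero, add_zero, zero_add, one_mul, mul_one, hv, hsv t, hvu t]
    have hBX : ∀ X : Matrix (Fin 2) (Fin 2) H,
        !![v, 0; 0, v] * ((!![v, 0; 0, v])ᴴ * X) = X := fun X => by
      rw [← Matrix.mul_assoc, hB, one_mul]
    have hQX : ∀ X : Matrix (Fin 2) (Fin 2) H, Q * (Qᴴ * X) = X := fun X => by
      rw [← Matrix.mul_assoc, hQ', one_mul]
    have hγ : GMcurve Q x t = !![u, 0; 0, 1] * Q * !![v, 0; 0, v] := rfl
    rw [hγ, Matrix.conjTranspose_mul, Matrix.conjTranspose_mul]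
    simp only [Matrix.mul_assoc, hBX, hQX]
    exact hA
  · -- derivatives
    have hu : HasDerivAt (fun t : ℝ => NormedSpace.exp (t • x)) x 0 := by
      simpa [NormedSpace.exp_zero] using
        hasDerivAt_exp_smul_const' (𝕂 := ℝ) x (0 : ℝ)
    have hv : HasDerivAt (fun t : ℝ => NormedSpace.exp (-(t • x))) (-x) 0 := by
      have := hasDerivAt_exp_smul_const' (𝕂 := ℝ) (-x) (0 : ℝ)
      simpa [NormedSpace.exp_zero, smul_neg] using this
    have key : ∀ q : H, HasDerivAt
        (fun t : ℝ => NormedSpace.exp (t • x) * q * NormedSpace.exp (-(t • x)))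
        (x * q - q * x) 0 := by
      intro q
      have := (hu.mul_const q).mul hv
      simpa [NormedSpace.exp_zero, mul_neg, sub_eq_add_neg, Pi.mul_def] using this
    have key2 : ∀ q : H, HasDerivAt
        (fun t : ℝ => q * NormedSpace.exp (-(t • x))) (-(q * x)) 0 := by
      intro q
      simpa [mul_neg] using hv.const_mul q
    intro i j
    simp only [hQxi]
    have hfun : ∀ i j, (fun t : ℝ => GMcurve Q x t i j) = fun t : ℝ =>
        (!![NormedSpace.exp (t • x) * Q 0 0 * NormedSpace.exp (-(t • x)),
         NormedSpace.exp (t • x) * Q 0 1 * NormedSpace.exp (-(t • x));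
         Q 1 0 * NormedSpace.exp (-(t • x)),
         Q 1 1 * NormedSpace.exp (-(t • x))] : Matrix (Fin 2) (Fin 2) H) i j := by
      intro i j
      funext t
      rw [hcurve t]
    rw [hfun]
    fin_cases i <;> fin_cases j <;>
      simp only [Matrix.cons_val', Matrix.cons_val_zero, Matrix.cons_val_one,
        Matrix.head_cons, Matrix.head_fin_const, Matrix.empty_val',
        Matrix.cons_val_fin_one, Fin.isValue, Fin.zero_eta, Fin.mk_one]
    · exact key (Q 0 0)
    · exact key (Q 0 1)
    · exact key2 (Q 1 0)
    · exact key2 (Q 1 1)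
end
end

section
/- For every Q ∈ Sp(2) with Re(Q₀₀) = 1 there exists a unit quaternion q such that [[q, 0], [0, 1]] · Q · [[q̄, 0], [0, q̄]] is the identity matrix; and for every Q ∈ Sp(2) with Re(Q₀₀) = −1 there exists a unit quaternion q such that [[q, 0], [0, 1]] · Q · [[q̄, 0], [0, q̄]] = [[−1, 0], [0, 1]]. Hence the two focal varieties F⁻¹(1) and F⁻¹(−1) of F(Q) = Re(Q₀₀) are each a single Gromoll–Meyer S³-orbit, i.e. the induced transnormal function on the Gromoll–Meyer sphere Σ⁷ = Sp(2)/S³ has exactly two points as its focal varieties. -/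
noncomputable section
open Matrix

lemma sp2_structure (Q : Matrix (Fin 2) (Fin 2) H) (hQ : Q ∈ Sp2)
    (e : ℝ) (he : e = 1 ∨ e = -1) (hre : (Q 0 0).re = e) :
    Q 0 0 = (e : H) ∧ Q 0 1 = 0 ∧ Q 1 0 = 0 ∧ ‖Q 1 1‖ = 1 := by
  have hQ' : Q * Qᴴ = 1 := hQ
  have h00 : Q 0 0 * star (Q 0 0) + Q 0 1 * star (Q 0 1) = 1 := by
    have := congrFun (congrFun hQ' 0) 0
    simpa [Matrix.mul_apply, Fin.sum_univ_two, Matrix.conjTranspose_apply,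
      Matrix.one_apply] using this
  rw [Quaternion.self_mul_star, Quaternion.self_mul_star] at h00
  have h00' : Quaternion.normSq (Q 0 0) + Quaternion.normSq (Q 0 1) = 1 := by
    have := congrArg (fun x : H => x.re) h00
    simpa [Quaternion.re_one] using this
  have hns0 : Quaternion.normSq (Q 0 0) = (Q 0 0).re^2 + (Q 0 0).imI^2
      + (Q 0 0).imJ^2 + (Q 0 0).imK^2 := by
    rw [Quaternion.normSq_def']
  have hns1 : (0:ℝ) ≤ Quaternion.normSq (Q 0 1) := Quaternion.normSq_nonneg
  have hre2 : (Q 0 0).re^2 = 1 := by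
    rcases he with h | h <;> rw [hre, h] <;> norm_num
  have key : (Q 0 0).imI^2 + (Q 0 0).imJ^2 + (Q 0 0).imK^2
      + Quaternion.normSq (Q 0 1) = 0 := by linarith
  have himI : (Q 0 0).imI = 0 := by
    nlinarith [sq_nonneg (Q 0 0).imI, sq_nonneg (Q 0 0).imJ, sq_nonneg (Q 0 0).imK]
  have himJ : (Q 0 0).imJ = 0 := by
    nlinarith [sq_nonneg (Q 0 0).imI, sq_nonneg (Q 0 0).imJ, sq_nonneg (Q 0 0).imK]
  have himK : (Q 0 0).imK = 0 := by
    nlinarith [sq_nonneg (Q 0 0).imI, sq_nonneg (Q 0 0).imJ, sq_nonneg (Q 0 0).imK]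
  have hQ00 : Q 0 0 = (e : H) := by
    ext <;> simp [hre, himI, himJ, himK]
  have hQ01 : Q 0 1 = 0 := by
    rw [← Quaternion.normSq_eq_zero]
    nlinarith [sq_nonneg (Q 0 0).imI, sq_nonneg (Q 0 0).imJ, sq_nonneg (Q 0 0).imK]
  have h10 : Q 1 0 * star (Q 0 0) + Q 1 1 * star (Q 0 1) = 0 := by
    have := congrFun (congrFun hQ' 1) 0
    simpa [Matrix.mul_apply, Fin.sum_univ_two, Matrix.conjTranspose_apply,
      Matrix.one_apply] using this
  rw [hQ00, hQ01] at h10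
  have hQ10 : Q 1 0 = 0 := by
    rcases he with h | h <;> rw [h] at h10 <;> push_cast at h10 <;> simpa using h10
  have h11 : Q 1 0 * star (Q 1 0) + Q 1 1 * star (Q 1 1) = 1 := by
    have := congrFun (congrFun hQ' 1) 1
    simpa [Matrix.mul_apply, Fin.sum_univ_two, Matrix.conjTranspose_apply,
      Matrix.one_apply] using this
  rw [hQ10] at h11
  simp only [zero_mul, zero_add, Quaternion.self_mul_star] at h11
  have hns11 : Quaternion.normSq (Q 1 1) = 1 := by
    have := congrArg (fun x : H => x.re) h11
    simpa [Quaternion.re_one] using this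
  rw [Quaternion.normSq_eq_norm_mul_self] at hns11
  have : ‖Q 1 1‖ = 1 := by nlinarith [norm_nonneg (Q 1 1)]
  exact ⟨hQ00, hQ01, hQ10, this⟩

/-- Every `Q ∈ Sp(2)` with `Re Q₀₀ = 1` can be moved to the
identity matrix by the Gromoll–Meyer `S³`-action
`Q ↦ diag(q,1)·Q·diag(q̄,q̄)`, and every `Q ∈ Sp(2)` with `Re Q₀₀ = −1` can be
moved to `[[−1,0],[0,1]]`.  Hence the focal varieties `F⁻¹(±1)` of
`F(Q) = Re Q₀₀` are each a single Gromoll–Meyer orbit: the induced transnormal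
function on the Gromoll–Meyer sphere `Σ⁷ = Sp(2)/S³` has exactly two points as
its focal varieties. -/
theorem focal_varieties_are_single_orbits :
    (∀ Q ∈ Sp2, (Q 0 0).re = 1 →
      ∃ q : H, ‖q‖ = 1 ∧
        !![q, 0; 0, 1] * Q * !![star q, 0; 0, star q] = 1) ∧
    (∀ Q ∈ Sp2, (Q 0 0).re = -1 →
      ∃ q : H, ‖q‖ = 1 ∧
        !![q, 0; 0, 1] * Q * !![star q, 0; 0, star q] = !![-1, 0; 0, 1]) := by
  constructor
  · intro Q hQ hre
    obtain ⟨h00, h01, h10, h11⟩ := sp2_structure Q hQ 1 (Or.inl rfl) hre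
    refine ⟨Q 1 1, h11, ?_⟩
    have hmul : Q 1 1 * star (Q 1 1) = 1 := by
      rw [Quaternion.self_mul_star]
      rw [Quaternion.normSq_eq_norm_mul_self, h11]
      norm_num
    have h00' : Q 0 0 = (1 : H) := by rw [h00]; push_cast; ring
    have hQmat : Q = !![(1 : H), 0; 0, Q 1 1] := by
      refine Matrix.ext fun i j => ?_
      fin_cases i <;> fin_cases j <;> simp [h00', h01, h10]
    rw [hQmat, Matrix.mul_fin_two, Matrix.mul_fin_two]
    simp [hmul, Matrix.one_fin_two]
  · intro Q hQ hre
    obtain ⟨h00, h01, h10, h11⟩ := sp2_structure Q hQ (-1) (Or.inr rfl) hre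
    refine ⟨Q 1 1, h11, ?_⟩
    have hmul : Q 1 1 * star (Q 1 1) = 1 := by
      rw [Quaternion.self_mul_star]
      rw [Quaternion.normSq_eq_norm_mul_self, h11]
      norm_num
    have h00' : Q 0 0 = (-1 : H) := by rw [h00]; push_cast; ring
    have hQmat : Q = !![(-1 : H), 0; 0, Q 1 1] := by
      refine Matrix.ext fun i j => ?_
      fin_cases i <;> fin_cases j <;> simp [h00', h01, h10]
    rw [hQmat, Matrix.mul_fin_two, Matrix.mul_fin_two]
    simp [hmul, neg_mul, mul_neg]
end
end
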